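/- arXiv:2006.13093 — 2 statements merged into one kernel-verified Lean document; each statement's English description precedes it below -/
import Mathlib

section
/- Let Z : (−∞, t₀] → ℝ be a C¹ solution of Ż ≤ Z(N + a − Z/λ) with Z(t₀) > λ(N+a) (λ > 0, N + a > 0). Then Z cannot be defined (staying above λ(N+a)) for all t ≤ t₀: there exists a finite backward time at which Z blows up. Consequently, any solution of Ż ≤ Z(N+a−Z/λ) defined on (−∞, t₀] must satisfy Z(t) ≤ λ(N+a) for all t sufficiently negative. -/
/-!
Above the equilibrium `L = λ(N + a)` the inequality forces `Ż ≤ -(Z - L)² / λ`. Hence `Z` is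
strictly decreasing whenever it exceeds `L`, so once `Z(s) > L` it stays `≥ Z(s)` for all earlier
times, and `w = Z - L` satisfies the Riccati inequality `ẇ ≤ -w² / λ` on all of `(-∞, s]`.
Integrating, `1 / w` grows at rate at least `1 / λ`, so going backward it reaches `0` within time
`λ / w(s)`: `Z` blows up in finite backward time, contradicting that it is defined for all `t ≤ s`.
-/

open Set

lemma le_image_of_hasDerivAt_neg_at_level {f f' : ℝ → ℝ} {c t s : ℝ}
    (hf : ∀ x ∈ Icc t s, HasDerivAt f (f' x) x) (hs : c ≤ f s)
    (hlevel : ∀ x ∈ Icc t s, f x = c → f' x < 0) : ∀ x ∈ Icc t s, c ≤ f x := by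
  -- reversing time, `τ ↦ -f (s - τ)` stays `≤ -c` by the forward fencing theorem
  have hrev : ∀ τ ∈ Icc 0 (s - t), HasDerivAt (fun τ ↦ -f (s - τ)) (f' (s - τ)) τ := by
    intro τ hτ
    simpa using ((hf (s - τ) ⟨by linarith [hτ.2], by linarith [hτ.1]⟩).comp_const_sub s τ).fun_neg
  have hbound := image_le_of_deriv_right_lt_deriv_boundary (a := 0) (b := s - t)
    (B := fun _ ↦ -c) (B' := fun _ ↦ 0)
    (fun τ hτ ↦ (hrev τ hτ).continuousAt.continuousWithinAt)
    (fun τ hτ ↦ (hrev τ (Ico_subset_Icc_self hτ)).hasDerivWithinAt)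
    (by simpa using hs) (fun _ ↦ hasDerivAt_const _ _)
    (fun τ hτ heq ↦ hlevel (s - τ) ⟨by linarith [hτ.2], by linarith [hτ.1]⟩ (by linarith))
  intro x hx
  have := hbound (x := s - x) ⟨by linarith [hx.2], by linarith [hx.1]⟩
  simp only [sub_sub_cancel] at this
  linarith

lemma inv_add_mul_le_inv_of_hasDerivAt_le_neg_sq {w w' : ℝ → ℝ} {k t u : ℝ} (htu : t ≤ u)
    (hw : ∀ x ∈ Icc t u, HasDerivAt w (w' x) x) (hpos : ∀ x ∈ Icc t u, 0 < w x)
    (hle : ∀ x ∈ Icc t u, w' x ≤ -k * w x ^ 2) :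
    (w t)⁻¹ + k * (u - t) ≤ (w u)⁻¹ := by
  have hg : ∀ x ∈ Icc t u,
      HasDerivAt (fun y ↦ (w y)⁻¹ - k * y) (-w' x / w x ^ 2 - k) x := fun x hx ↦
    ((hw x hx).inv (hpos x hx).ne').sub (by simpa using (hasDerivAt_id x).const_mul k)
  have hmono : MonotoneOn (fun y ↦ (w y)⁻¹ - k * y) (Icc t u) := by
    refine monotoneOn_of_hasDerivWithinAt_nonneg (convex_Icc t u)
      (fun x hx ↦ (hg x hx).continuousAt.continuousWithinAt)
      (fun x hx ↦ (hg x (interior_subset hx)).hasDerivWithinAt) fun x hx ↦ ?_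
    have hx' := interior_subset hx
    have hsq : 0 < w x ^ 2 := pow_pos (hpos x hx') 2
    rw [sub_nonneg, le_div_iff₀ hsq]
    linarith [hle x hx']
  have := hmono (left_mem_Icc.2 htu) (right_mem_Icc.2 htu) htu
  simp only at this
  linarith

lemma exists_nonpos_of_hasDerivAt_le_neg_sq {w w' : ℝ → ℝ} {k u : ℝ} (hk : 0 < k)
    (hw : ∀ x ≤ u, HasDerivAt w (w' x) x) (hle : ∀ x ≤ u, 0 < w x → w' x ≤ -k * w x ^ 2) :
    ∃ x ≤ u, w x ≤ 0 := by
  by_contra! hpos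
  set t := u - (w u)⁻¹ / k
  have htu : t ≤ u := sub_le_self _ (div_nonneg (inv_pos.2 (hpos u le_rfl)).le hk.le)
  have hint := inv_add_mul_le_inv_of_hasDerivAt_le_neg_sq htu
    (fun x hx ↦ hw x hx.2) (fun x hx ↦ hpos x (hx.2.trans le_rfl))
    (fun x hx ↦ hle x hx.2 (hpos x hx.2))
  have hkt : k * (u - t) = (w u)⁻¹ := by simp only [t]; field_simp; ring
  linarith [inv_pos.2 (hpos t htu)]

lemma mul_sub_div_le_neg_inv_mul_sq {lam b z : ℝ} (hlam : 0 < lam) (hb : 0 ≤ b)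
    (hz : lam * b ≤ z) : z * (b - z / lam) ≤ -lam⁻¹ * (z - lam * b) ^ 2 := by
  have hdiff : -lam⁻¹ * (z - lam * b) ^ 2 - z * (b - z / lam) = b * (z - lam * b) := by
    field_simp; ring
  nlinarith [mul_nonneg hb (sub_nonneg.2 hz)]

theorem stmt13 (lam N a : ℝ) (hlam : 0 < lam) (hNa : 0 < N + a) (t₀ : ℝ)
    (Z Z' : ℝ → ℝ)
    (hderiv : ∀ t ≤ t₀, HasDerivAt Z (Z' t) t)
    (hineq : ∀ t ≤ t₀, lam * (N + a) < Z t → Z' t ≤ Z t * (N + a - Z t / lam)) :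
    ∀ t ≤ t₀, Z t ≤ lam * (N + a) := by
  set L := lam * (N + a)
  have hriccati : ∀ t ≤ t₀, L < Z t → Z' t ≤ -lam⁻¹ * (Z t - L) ^ 2 := fun t ht hZ ↦
    (hineq t ht hZ).trans (mul_sub_div_le_neg_inv_mul_sq hlam hNa.le hZ.le)
  intro s hs
  by_contra! hZs
  obtain ⟨x, hxs, hx⟩ := exists_nonpos_of_hasDerivAt_le_neg_sq (inv_pos.2 hlam) (u := s)
    (w := fun t ↦ Z t - L) (fun t ht ↦ (hderiv t (ht.trans hs)).sub_const L)
    (fun t ht hpos ↦ hriccati t (ht.trans hs) (sub_pos.1 hpos))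
  have hbarrier := le_image_of_hasDerivAt_neg_at_level (c := Z s) (t := x) (s := s)
    (fun t ht ↦ hderiv t (ht.2.trans hs)) le_rfl fun t ht hZt ↦ by
      have := hriccati t (ht.2.trans hs) (hZt.symm ▸ hZs)
      rw [hZt] at this
      nlinarith [mul_pos (inv_pos.2 hlam) (pow_pos (sub_pos.2 hZs) 2)]
  linarith [hbarrier x (left_mem_Icc.2 hxs)]
end

section
/- Suppose u is a regular radial solution of the Pucci M⁺ equation near r = 0, i.e. the corresponding trajectory satisfies X(t) → 0 and Z(t) → λ(N+a) as t → −∞, with u(0) = γ > 0. Then u'(r)/r^{1+a} → −γ^p/(λ(N+a)) and u''(r)/r^a → −(γ^p/λ)·(a+1)/(N+a) as r → 0⁺. -/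
/-! In the variable r = eᵗ the hypothesis on Z says that -r^(1+a) u^p / u' → λ(N+a); together with
u(0⁺) = γ this gives the limit of u'/r^(1+a).  Dividing the equation by r^a expresses u''/r^a through
u'/r^(1+a) and u^p, which gives the second limit. -/

open Real Filter Set Topology

lemma tendsto_nhdsGT_zero_of_tendsto_comp_exp {α : Type*} {f : ℝ → α} {l : Filter α}
    (h : Tendsto (fun t => f (exp t)) atBot l) : Tendsto f (𝓝[>] 0) l := by
  rwa [← map_exp_atBot, tendsto_map'_iff]

/-- If `Z = -(g v) / w` has a nonzero limit, then eventually `Z ≠ 0`, which forces `g, v, w ≠ 0`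
and hence `w / g = -v / Z`. -/
lemma tendsto_div_of_tendsto_neg_mul_div {α : Type*} {l : Filter α} {g v w : α → ℝ} {A L : ℝ}
    (hv : Tendsto v l (𝓝 A)) (hZ : Tendsto (fun x => -(g x * v x) / w x) l (𝓝 L))
    (hL : L ≠ 0) : Tendsto (fun x => w x / g x) l (𝓝 (-(A / L))) := by
  refine (neg_div L A ▸ hv.neg.div hZ hL).congr' ?_
  filter_upwards [hZ.eventually_ne hL] with x hx
  have hw : w x ≠ 0 := fun h => hx (by simp [h])
  have hg : g x ≠ 0 := fun h => hx (by simp [h])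
  have hv : v x ≠ 0 := fun h => hx (by simp [h])
  simp only [Pi.div_apply]
  field_simp

lemma div_rpow_eq_of_add_div_add_eq_zero {N a lam r v' v'' q : ℝ} (hr : 0 < r)
    (h : v'' + (N - 1) * v' / r + r ^ a * q / lam = 0) :
    v'' / r ^ a = -(N - 1) * (v' / r ^ (1 + a)) - q / lam := by
  have hra : 0 < r ^ a := rpow_pos_of_pos hr a
  rw [eq_sub_of_add_eq (eq_sub_of_add_eq h), rpow_add hr, rpow_one]
  field_simp
  ring

theorem stmt18_general (N : ℕ) (hN : 3 ≤ N) (lam a p γ δ : ℝ)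
    (hlam : 0 < lam) (ha : -1 < a) (hγ : 0 < γ) (hδ : 0 < δ)
    (u u' u'' : ℝ → ℝ)
    (hu0 : u 0 = γ)
    (hucont : ContinuousOn u (Set.Ico 0 δ))
    (heq : ∀ r ∈ Set.Ioo (0:ℝ) δ,
      u'' r + ((N : ℝ) - 1) * u' r / r + r ^ a * u r ^ p / lam = 0)
    (hZlim : Filter.Tendsto
      (fun t => -(Real.exp ((1+a)*t) * u (Real.exp t) ^ p) / u' (Real.exp t))
      Filter.atBot (nhds (lam * ((N : ℝ) + a)))) :
    Filter.Tendsto (fun r => u' r / r ^ (1+a)) (nhdsWithin 0 (Set.Ioi (0:ℝ)))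
      (nhds (-(γ ^ p / (lam * ((N : ℝ) + a))))) ∧
    Filter.Tendsto (fun r => u'' r / r ^ a) (nhdsWithin 0 (Set.Ioi (0:ℝ)))
      (nhds (-(γ ^ p / lam) * ((a+1)/((N : ℝ) + a)))) := by
  have hNa : (N : ℝ) + a ≠ 0 := by
    have : (3 : ℝ) ≤ N := by exact_mod_cast hN
    linarith
  have hZ : Tendsto (fun r => -(r ^ (1 + a) * u r ^ p) / u' r) (𝓝[>] 0)
      (𝓝 (lam * ((N : ℝ) + a))) :=
    tendsto_nhdsGT_zero_of_tendsto_comp_exp (by simpa only [mul_comm (1 + a), exp_mul] using hZlim)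
  have hu : Tendsto u (𝓝[>] 0) (𝓝 γ) := by
    have hcont := hu0 ▸ (hucont 0 ⟨le_rfl, hδ⟩).tendsto
    exact hcont.mono_left (nhdsWithin_Ioo_eq_nhdsGT hδ ▸ nhdsWithin_mono 0 Ioo_subset_Ico_self)
  have hup : Tendsto (fun r => u r ^ p) (𝓝[>] 0) (𝓝 (γ ^ p)) := hu.rpow_const (Or.inl hγ.ne')
  have h1 := tendsto_div_of_tendsto_neg_mul_div hup hZ (mul_ne_zero hlam.ne' hNa)
  refine ⟨h1, ?_⟩
  have hlim : -((N : ℝ) - 1) * -(γ ^ p / (lam * (N + a))) - γ ^ p / lam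
      = -(γ ^ p / lam) * ((a + 1) / (N + a)) := by
    field_simp
    ring
  refine hlim ▸ ((h1.const_mul _).sub (hup.div_const lam)).congr' ?_
  filter_upwards [Ioo_mem_nhdsGT hδ] with r hr
  exact (div_rpow_eq_of_add_div_add_eq_zero hr.1 (heq r hr)).symm

theorem stmt18 (N : ℕ) (hN : 3 ≤ N) (lam a p γ δ : ℝ)
    (hlam : 0 < lam) (ha : -1 < a) (hp : 1 < p) (hγ : 0 < γ) (hδ : 0 < δ)
    (u u' u'' : ℝ → ℝ)
    (hu0 : u 0 = γ)
    (hucont : ContinuousOn u (Set.Ico 0 δ))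
    (hd1 : ∀ r ∈ Set.Ioo (0:ℝ) δ, HasDerivAt u (u' r) r)
    (hd2 : ∀ r ∈ Set.Ioo (0:ℝ) δ, HasDerivAt u' (u'' r) r)
    (hneg : ∀ r ∈ Set.Ioo (0:ℝ) δ, u' r < 0)
    (hpos : ∀ r ∈ Set.Ioo (0:ℝ) δ, 0 < u r)
    (heq : ∀ r ∈ Set.Ioo (0:ℝ) δ,
      u'' r + ((N : ℝ) - 1) * u' r / r + r ^ a * u r ^ p / lam = 0)
    (hXlim : Filter.Tendsto
      (fun t => -(Real.exp t * u' (Real.exp t)) / u (Real.exp t))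
      Filter.atBot (nhds 0))
    (hZlim : Filter.Tendsto
      (fun t => -(Real.exp ((1+a)*t) * u (Real.exp t) ^ p) / u' (Real.exp t))
      Filter.atBot (nhds (lam * ((N : ℝ) + a)))) :
    Filter.Tendsto (fun r => u' r / r ^ (1+a)) (nhdsWithin 0 (Set.Ioi (0:ℝ)))
      (nhds (-(γ ^ p / (lam * ((N : ℝ) + a))))) ∧
    Filter.Tendsto (fun r => u'' r / r ^ a) (nhdsWithin 0 (Set.Ioi (0:ℝ)))
      (nhds (-(γ ^ p / lam) * ((a+1)/((N : ℝ) + a)))) :=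
  stmt18_general N hN lam a p γ δ hlam ha hγ hδ u u' u'' hu0 hucont heq hZlim
end
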